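/- Let A be a residual deterministic block automaton over a finite alphabet Σ. Let p be a state of A and w a word such that {v ∈ Σ* | w·v ∈ L(p)} ≠ ∅. Then {v ∈ Σ* | w·v ∈ L(p)} = ⋃_{(u,r) ∈ Δ(p,w)} u·L(r), where Δ is the pathway function of A. (In the paper's terms: if (Φ(p), w, s) ∈ δ_M* in the minimal DFA M of L_A, then L(s) = ⋃_{(u,r) ∈ Δ(p,w)} u·L(r).) -/
import Mathlib


set_option autoImplicit false

/-- A block automaton over an alphabet `α`: a set of initial states, a set of final
states, and a set of transitions labeled by words over `α`. -/
structure BlockAutomaton (α : Type) (Q : Type) where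
  init : Set Q
  final : Set Q
  trans : Set (Q × List α × Q)

namespace BlockAutomaton

variable {α Q : Type}

/-- Well-formedness: the transition set is finite and every label is a block
(a nonempty word). -/
def IsWF (A : BlockAutomaton α Q) : Prop :=
  A.trans.Finite ∧ ∀ t ∈ A.trans, t.2.1 ≠ ([] : List α)

/-- The transitive closure `δ*` of the transition relation. -/
inductive Path (A : BlockAutomaton α Q) : Q → List α → Q → Prop
  | refl (p : Q) : Path A p [] p
  | step {p r q : Q} {b u : List α} :
      (p, b, r) ∈ A.trans → Path A r u q → Path A p (b ++ u) q

/-- The right language of a state. -/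
def rightLang (A : BlockAutomaton α Q) (q : Q) : Language α :=
  {w | ∃ f ∈ A.final, A.Path q w f}

/-- The language recognized by the automaton. -/
def lang (A : BlockAutomaton α Q) : Language α :=
  {w | ∃ i ∈ A.init, ∃ f ∈ A.final, A.Path i w f}

/-- Deterministic: a unique initial state, and the labels of two distinct transitions
going out of the same state are never prefixes of one another. -/
def Deterministic (A : BlockAutomaton α Q) : Prop :=
  (∃ i, A.init = {i}) ∧
    ∀ p b₁ q₁ b₂ q₂, (p, b₁, q₁) ∈ A.trans → (p, b₂, q₂) ∈ A.trans →
      (b₁, q₁) ≠ (b₂, q₂) → ¬ b₁ <+: b₂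

/-- Trim: every state is accessible and co-accessible. -/
def Trim (A : BlockAutomaton α Q) : Prop :=
  ∀ q : Q, (∃ i ∈ A.init, ∃ u, A.Path i u q) ∧ (∃ f ∈ A.final, ∃ v, A.Path q v f)

/-- `k`-block: every transition label has length at most `k`. -/
def KBlock (A : BlockAutomaton α Q) (k : ℕ) : Prop :=
  ∀ t ∈ A.trans, t.2.1.length ≤ k

/-- Compact: no two distinct states have the same right language. -/
def Compact (A : BlockAutomaton α Q) : Prop :=
  ∀ p q : Q, A.rightLang p = A.rightLang q → p = q

/-- Left quotient `u⁻¹L` of a language by a word. -/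
def leftQuot (u : List α) (L : Language α) : Language α := {w | u ++ w ∈ L}

/-- Residual: every right language is a left quotient of the recognized language. -/
def Residual (A : BlockAutomaton α Q) : Prop :=
  ∀ p : Q, ∃ u : List α, A.rightLang p = leftQuot u A.lang

/-- L-equivalence: same language and same family of right languages. -/
def LEquiv {Q₁ Q₂ : Type} (A : BlockAutomaton α Q₁) (B : BlockAutomaton α Q₂) : Prop :=
  A.lang = B.lang ∧ Set.range A.rightLang = Set.range B.rightLang

/-- The set of final labels FB(A). -/
def finalLabels (A : BlockAutomaton α Q) : Set (List α) :=
  {b | ∃ f ∈ A.final, ∃ q, (f, b, q) ∈ A.trans}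

/-- The set of consistency C(A): pairs (b, s) with b a block such that every final
state has a transition labeled b to s. -/
def consist (A : BlockAutomaton α Q) : Set (List α × Q) :=
  {bs | bs.1 ≠ [] ∧ ∀ f ∈ A.final, (f, bs.1, bs.2) ∈ A.trans}

/-- The (b,s)-cut: remove every transition (f, b, s) with f final. -/
def cut (A : BlockAutomaton α Q) (b : List α) (s : Q) : BlockAutomaton α Q :=
  ⟨A.init, A.final, {t ∈ A.trans | ¬(t.1 ∈ A.final ∧ t.2.1 = b ∧ t.2.2 = s)}⟩

/-- (b, s) is a vacant pair: b is a block and no final state has a transition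
labeled b to s. -/
def Vacant (A : BlockAutomaton α Q) (b : List α) (s : Q) : Prop :=
  b ≠ [] ∧ ∀ f ∈ A.final, (f, b, s) ∉ A.trans

/-- The (b,s)-add: add the transition (f, b, s) for every final state f. -/
def add (A : BlockAutomaton α Q) (b : List α) (s : Q) : BlockAutomaton α Q :=
  ⟨A.init, A.final, A.trans ∪ {t | t.1 ∈ A.final ∧ t.2.1 = b ∧ t.2.2 = s}⟩

/-- The underlying edge relation of the automaton. -/
def Edge (A : BlockAutomaton α Q) (p q : Q) : Prop := ∃ b, (p, b, q) ∈ A.trans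

/-- Reachability. -/
def Reach (A : BlockAutomaton α Q) : Q → Q → Prop := Relation.ReflTransGen A.Edge

/-- The orbit (strongly connected component) of a state. -/
def orbitOf (A : BlockAutomaton α Q) (q : Q) : Set Q := {p | A.Reach q p ∧ A.Reach p q}

/-- A set is an orbit if it is the strongly connected component of some state. -/
def IsOrbit (A : BlockAutomaton α Q) (O : Set Q) : Prop := ∃ q, O = A.orbitOf q

/-- A trivial orbit: a single state with no self-loop. -/
def TrivialOrbit (A : BlockAutomaton α Q) (O : Set Q) : Prop :=
  ∃ p, O = {p} ∧ ∀ b, (p, b, p) ∉ A.trans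

/-- A non re-entering component: a union of orbits such that no state outside
reachable from it can reach back. -/
def NonReentering (A : BlockAutomaton α Q) (R : Set Q) : Prop :=
  (∀ p ∈ R, A.orbitOf p ⊆ R) ∧
    ∀ r ∈ R, ∀ q, q ∉ R → A.Reach r q → ¬ A.Reach q r

/-- A gate of R: a state of R that is final or the origin of an out-transition. -/
def IsGate (A : BlockAutomaton α Q) (R : Set Q) (g : Q) : Prop :=
  g ∈ R ∧ (g ∈ A.final ∨ ∃ b p, (g, b, p) ∈ A.trans ∧ p ∉ R)

/-- R is transverse: all gates agree on finality and on out-transitions. -/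
def Transverse (A : BlockAutomaton α Q) (R : Set Q) : Prop :=
  ∀ g₁ g₂, A.IsGate R g₁ → A.IsGate R g₂ →
    (g₁ ∈ A.final ↔ g₂ ∈ A.final) ∧
      ∀ b p, p ∉ R → ((g₁, b, p) ∈ A.trans ↔ (g₂, b, p) ∈ A.trans)

/-- The orbit property: every orbit is transverse. -/
def OrbitProperty (A : BlockAutomaton α Q) : Prop :=
  ∀ O : Set Q, A.IsOrbit O → A.Transverse O

/-- The restriction of the automaton to the internal transitions of R. -/
def internalAut (A : BlockAutomaton α Q) (R : Set Q) : BlockAutomaton α Q :=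
  ⟨A.init, A.final, {t ∈ A.trans | t.1 ∈ R ∧ t.2.2 ∈ R}⟩

/-- The internal language of a state of R: words sending it to a gate of R
through internal transitions. -/
def Lin (A : BlockAutomaton α Q) (R : Set Q) (p : Q) : Language α :=
  {w | ∃ g, A.IsGate R g ∧ (A.internalAut R).Path p w g}

/-- The external language of a state of R. -/
def Lext (A : BlockAutomaton α Q) (R : Set Q) (p : Q) : Language α :=
  {w | (p ∈ A.final ∧ w = []) ∨
    ∃ b q, (p, b, q) ∈ A.trans ∧ q ∉ R ∧ ∃ v, v ∈ A.rightLang q ∧ w = b ++ v}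

/-- The external language of R: the (common, when R is transverse) external
language of the gates of R (empty if R has no gate). -/
def Lout (A : BlockAutomaton α Q) (R : Set Q) : Language α :=
  {w | ∃ g, A.IsGate R g ∧ w ∈ A.Lext R g}

/-- The automaton B_O of an orbit O used in the BW-test: transitions are the internal
transitions of O, final states are the gates of O (the initial states are irrelevant). -/
def orbAut (A : BlockAutomaton α Q) (O : Set Q) : BlockAutomaton α Q :=
  ⟨A.init, {g | A.IsGate O g}, {t ∈ A.trans | t.1 ∈ O ∧ t.2.2 ∈ O}⟩

/-- Fuel-indexed version of the BW-test (each recursive call removes at least one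
transition, so on automata with finitely many transitions the recursion needs only
finitely much fuel). -/
def BWTestFuel : ℕ → BlockAutomaton α Q → Prop
  | 0, _ => False
  | n + 1, A => A.OrbitProperty ∧
      ∀ O : Set Q, A.IsOrbit O → ¬ A.TrivialOrbit O →
        ∃ b s, (b, s) ∈ (A.orbAut O).consist ∧ BWTestFuel n ((A.orbAut O).cut b s)

/-- The BW-test: A passes iff A has the orbit property and, for every nontrivial
orbit O of A, some consistent cut of the automaton B_O of the orbit passes the
BW-test (well-founded since every cut removes a transition; `BWTestFuel` is
monotone in the fuel, so the existential gives exactly this recursive predicate). -/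
def BWTest (A : BlockAutomaton α Q) : Prop := ∃ n, BWTestFuel n A

/-- The orbit automaton Orb(A, q): states are the orbit of q, initial state q, final
states the gates of the orbit, transitions the internal transitions of the orbit. -/
def orbAutAt (A : BlockAutomaton α Q) (q : Q) :
    BlockAutomaton α {p : Q // p ∈ A.orbitOf q} where
  init := {x | x.val = q}
  final := {x | A.IsGate (A.orbitOf q) x.val}
  trans := {t | (t.1.val, t.2.1, t.2.2.val) ∈ A.trans}

/-- The pathway function Δ. -/
def pathway (A : BlockAutomaton α Q) (p : Q) (u : List α) : Set (List α × Q) :=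
  {vq | A.Path p (u ++ vq.1) vq.2 ∧
    ∀ x, x <+: vq.1 → x ≠ vq.1 → ∀ r, ¬ A.Path p (u ++ x) r}

/-- The states of the minimal DFA of L: the nonempty left quotients of L. -/
def QuotState (L : Language α) : Type :=
  {P : Language α // (∃ u : List α, P = leftQuot u L) ∧ ∃ w, w ∈ P}

/-- The minimal DFA of L. -/
def minDFA (L : Language α) : BlockAutomaton α (QuotState L) where
  init := {P | P.val = L}
  final := {P | [] ∈ P.val}
  trans := {t | ∃ a : α, t.2.1 = [a] ∧ t.2.2.val = leftQuot [a] t.1.val}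

/-- The k-transition automaton of L. -/
def kTransAut (L : Language α) (k : ℕ) : BlockAutomaton α (QuotState L) where
  init := (minDFA L).init
  final := (minDFA L).final
  trans := {t | (minDFA L).Path t.1 t.2.1 t.2.2 ∧ 1 ≤ t.2.1.length ∧ t.2.1.length ≤ k ∧
    ∀ u, u <+: t.2.1 → u ≠ [] → u ≠ t.2.1 → u ∉ t.1.val}

/-- B is isomorphic to a sub-automaton of T. -/
def IsoToSub {Q₁ Q₂ : Type} (B : BlockAutomaton α Q₁) (T : BlockAutomaton α Q₂) : Prop :=
  ∃ φ : Q₁ → Q₂, Function.Injective φ ∧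
    φ '' B.init ⊆ T.init ∧ φ '' B.final ⊆ T.final ∧
    ∀ p b q, (p, b, q) ∈ B.trans → (φ p, b, φ q) ∈ T.trans

/-- Isomorphism of block automata. -/
def Isomorphic {Q₁ Q₂ : Type} (B : BlockAutomaton α Q₁) (C : BlockAutomaton α Q₂) : Prop :=
  ∃ φ : Q₁ ≃ Q₂, φ '' B.init = C.init ∧ φ '' B.final = C.final ∧
    ∀ p b q, ((p, b, q) ∈ B.trans ↔ (φ p, b, φ q) ∈ C.trans)

/-- The substitution of B for the orbit O(q) of A via h (iA is the unique initial
state of A). -/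
def substAut {QB : Type} (A : BlockAutomaton α Q) (iA q : Q)
    (B : BlockAutomaton α QB) (h : Q → QB) :
    BlockAutomaton α ({p : Q // p ∉ A.orbitOf q} ⊕ QB) where
  init := {x | (iA ∈ A.orbitOf q ∧ x = Sum.inr (h iA)) ∨
    ∃ hp : iA ∉ A.orbitOf q, x = Sum.inl ⟨iA, hp⟩}
  final := {x | (∃ p, ∃ hp : p ∉ A.orbitOf q, p ∈ A.final ∧ x = Sum.inl ⟨p, hp⟩) ∨
    ((∃ f ∈ A.final, f ∈ A.orbitOf q) ∧ ∃ fB ∈ B.final, x = Sum.inr fB)}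
  trans := {t |
    (∃ p r b, ∃ hp : p ∉ A.orbitOf q, ∃ hr : r ∉ A.orbitOf q,
      (p, b, r) ∈ A.trans ∧ t = (Sum.inl ⟨p, hp⟩, b, Sum.inl ⟨r, hr⟩)) ∨
    (∃ p r b, (p, b, r) ∈ B.trans ∧ t = (Sum.inr p, b, Sum.inr r)) ∨
    (∃ p o b, ∃ hp : p ∉ A.orbitOf q,
      (p, b, o) ∈ A.trans ∧ o ∈ A.orbitOf q ∧ t = (Sum.inl ⟨p, hp⟩, b, Sum.inr (h o))) ∨
    (∃ fB o p b, ∃ hp : p ∉ A.orbitOf q, fB ∈ B.final ∧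
      (o, b, p) ∈ A.trans ∧ o ∈ A.orbitOf q ∧ t = (Sum.inr fB, b, Sum.inl ⟨p, hp⟩))}

end BlockAutomaton

namespace BlockAutomaton

variable {α Q : Type}

lemma path_append {A : BlockAutomaton α Q} {p q f : Q} {s t : List α}
    (h1 : A.Path p s q) (h2 : A.Path q t f) : A.Path p (s ++ t) f := by
  induction h1 with
  | refl => simpa using h2
  | step hb _ ih => rw [List.append_assoc]; exact Path.step hb (ih h2)

lemma detFactor {A : BlockAutomaton α Q} (hwf : A.IsWF) (hdet : A.Deterministic)
    {p q : Q} {s : List α} (h1 : A.Path p s q) :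
    ∀ t q', A.Path p (s ++ t) q' → A.Path q t q' := by
  induction h1 with
  | refl => intro t q' h; simpa using h
  | @step p r q b u hb _ ih =>
    intro t q' h
    rw [List.append_assoc] at h
    generalize hs : b ++ (u ++ t) = s₂ at h
    cases h with
    | refl =>
      exfalso
      have : b = [] := (List.append_eq_nil_iff.mp hs).1
      exact hwf.2 _ hb this
    | @step _ r₂ _ b₂ u₂ hb₂ h₂ =>
      have hpre : b <+: b₂ ∨ b₂ <+: b := by
        rcases List.prefix_or_prefix_of_prefix (⟨u ++ t, hs⟩ : b <+: b₂ ++ u₂)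
          (List.prefix_append b₂ u₂) with h' | h'
        · exact Or.inl h'
        · exact Or.inr h'
      have heq : (b, r) = (b₂, r₂) := by
        by_contra hne
        rcases hpre with h' | h'
        · exact hdet.2 _ _ _ _ _ hb hb₂ hne h'
        · exact hdet.2 _ _ _ _ _ hb₂ hb (fun e => hne e.symm) h'
      obtain ⟨hb_eq, hr_eq⟩ := Prod.mk.injEq .. ▸ heq
      subst hb_eq
      have hu : u ++ t = u₂ := List.append_cancel_left hs
      subst hu
      exact ih t q' (hr_eq ▸ h₂)

end BlockAutomaton

/-- In a residual deterministic block automaton, if the left quotient of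
L(p) by w is nonempty, then it equals the union of the languages u·L(r) over the
pathway Δ(p, w). -/
theorem stmt12 {α Q : Type} [Fintype α] [Fintype Q]
    (A : BlockAutomaton α Q) (hwf : A.IsWF) (hdet : A.Deterministic) (hres : A.Residual)
    (p : Q) (w : List α)
    (hne : ∃ v, v ∈ BlockAutomaton.leftQuot w (A.rightLang p)) :
    BlockAutomaton.leftQuot w (A.rightLang p) =
      {z | ∃ u r, (u, r) ∈ A.pathway p w ∧ ∃ v, v ∈ A.rightLang r ∧ z = u ++ v} := by
  classical
  ext z
  constructor
  · rintro ⟨f, hf, hpath⟩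
    have hP : ∃ n, ∃ r, A.Path p (w ++ z.take n) r :=
      ⟨z.length, f, by simpa using hpath⟩
    set n := Nat.find hP with hn
    obtain ⟨r, hr⟩ := Nat.find_spec hP
    have hnle : n ≤ z.length := Nat.find_min' hP ⟨f, by simpa using hpath⟩
    refine ⟨z.take n, r, ⟨hr, ?_⟩, z.drop n, ?_, (List.take_append_drop n z).symm⟩
    · intro x hx hxne r' hr'
      have hxz : x <+: z := hx.trans (List.take_prefix n z)
      have hxlt : x.length < n := by
        have hle : x.length ≤ n := by
          have := hx.length_le
          simpa [List.length_take, Nat.min_eq_left hnle] using this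
        rcases lt_or_eq_of_le hle with h' | h'
        · exact h'
        · exfalso
          apply hxne
          have := List.prefix_iff_eq_take.mp hx
          rw [this, List.take_take, h', Nat.min_self]
      have : x = z.take x.length := List.prefix_iff_eq_take.mp hxz
      exact Nat.find_min hP hxlt ⟨r', by rw [← this]; exact hr'⟩
    · refine ⟨f, hf, ?_⟩
      apply A.detFactor hwf hdet hr
      rw [List.append_assoc, List.take_append_drop]
      exact hpath
  · rintro ⟨u, r, ⟨hpath, -⟩, v, ⟨f, hf, hpf⟩, rfl⟩
    refine ⟨f, hf, ?_⟩
    rw [← List.append_assoc]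
    exact BlockAutomaton.path_append hpath hpf
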